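/- Let m ≥ 1 and i ≥ 2 be integers. Then there exist real constants 0 < A ≤ B and an integer T ≥ i such that for every t ≥ T, A·ln t ≤ ∑_{l=i}^{t-1} ln(1 + c_l)·∏_{h=l+1}^{t-1}(1 - e_h) ≤ B·ln t. That is, the normalizing sequence ∑_{l=i}^{t-1} ln(1 + c_l)·∏_{h=l+1}^{t-1}(1 - e_h) is Θ(ln t) as t → ∞. -/

import Mathlib

/-! For `l ≥ 2` one has `1/l ≤ c_l ≤ 3/l` and `0 ≤ e_l ≤ ((l-1)⁻¹ - l⁻¹)/2`. The second bound
telescopes, so `∑_{h > l} e_h ≤ 1/2` and, by the Weierstrass product inequality, every product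
`∏ (1 - e_h)` lies in `[1/2, 1]`. Each summand is then squeezed between `(log (l+1) - log l)/2`
and `3 (log l - log (l-1))`, which telescope to `(log t - log i)/2` and at most `3 log t`;
for `t ≥ i²` the term `log i` is at most `(log t)/2`. -/

/-- `c_l = (2ml+1)/(l(2ml+1-2m))`. -/
noncomputable def cPAAPA (m l : ℕ) : ℝ :=
  (2 * (m : ℝ) * l + 1) / ((l : ℝ) * (2 * (m : ℝ) * l + 1 - 2 * m))

/-- `e_l = m/(l(2ml+1-2m))`. -/
noncomputable def ePAAPA (m l : ℕ) : ℝ :=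
  (m : ℝ) / ((l : ℝ) * (2 * (m : ℝ) * l + 1 - 2 * m))

open Finset Real

theorem Finset.one_sub_sum_le_prod_one_sub {ι R : Type*} [LinearOrder ι] [CommRing R]
    [LinearOrder R] [IsStrictOrderedRing R] (s : Finset ι) {f : ι → R}
    (h0 : ∀ i ∈ s, 0 ≤ f i) (h1 : ∀ i ∈ s, f i ≤ 1) :
    1 - ∑ i ∈ s, f i ≤ ∏ i ∈ s, (1 - f i) := by
  -- In `1 - ∑ f i * ∏_{j < i} (1 - f j)` every partial product lies in `[0, 1]`.
  rw [prod_one_sub_ordered]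
  gcongr with i hi
  refine mul_le_of_le_one_right (h0 i hi) (prod_le_one (fun j hj ↦ ?_) fun j hj ↦ ?_)
  · exact sub_nonneg.2 (h1 j (mem_filter.1 hj).1)
  · exact sub_le_self _ (h0 j (mem_filter.1 hj).1)

namespace Real

theorem log_add_one_sub_log {x : ℝ} (hx : 0 < x) : log (x + 1) - log x = log (1 + x⁻¹) := by
  rw [← log_div (by positivity) hx.ne', add_div, div_self hx.ne', one_div]

theorem inv_le_log_sub_log_sub_one {x : ℝ} (hx : 1 < x) : x⁻¹ ≤ log x - log (x - 1) := by
  have h := one_sub_inv_le_log_of_pos (show 0 < x / (x - 1) by apply div_pos <;> linarith)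
  rwa [log_div (by linarith) (by linarith), inv_div, one_sub_div (by linarith),
    sub_sub_cancel, one_div] at h

end Real

section Coefficients

variable {m l : ℕ}

theorem paapa_denom_pos (hl : 1 ≤ l) : 0 < (l : ℝ) * (2 * (m : ℝ) * l + 1 - 2 * m) := by
  have hl' : (1 : ℝ) ≤ l := by exact_mod_cast hl
  have : 0 ≤ (m : ℝ) * (l - 1) := mul_nonneg m.cast_nonneg (by linarith)
  exact mul_pos (by linarith) (by linarith)

theorem inv_le_cPAAPA (hl : 1 ≤ l) : (l : ℝ)⁻¹ ≤ cPAAPA m l := by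
  have hl' : (1 : ℝ) ≤ l := by exact_mod_cast hl
  rw [cPAAPA, inv_eq_one_div, div_le_div_iff₀ (by linarith) (paapa_denom_pos hl)]
  nlinarith [m.cast_nonneg (α := ℝ)]

theorem cPAAPA_le (hl : 2 ≤ l) : cPAAPA m l ≤ 3 / l := by
  have hl' : (2 : ℝ) ≤ l := by exact_mod_cast hl
  have : 0 ≤ (m : ℝ) * (l - 2) := mul_nonneg m.cast_nonneg (by linarith)
  rw [cPAAPA, div_le_div_iff₀ (paapa_denom_pos (by omega)) (by linarith)]
  nlinarith

theorem ePAAPA_nonneg (hl : 1 ≤ l) : 0 ≤ ePAAPA m l :=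
  div_nonneg m.cast_nonneg (paapa_denom_pos hl).le

theorem ePAAPA_le (hl : 2 ≤ l) : ePAAPA m l ≤ (((l : ℝ) - 1)⁻¹ - (l : ℝ)⁻¹) / 2 := by
  have hl' : (2 : ℝ) ≤ l := by exact_mod_cast hl
  have hl1 : (l : ℝ) - 1 ≠ 0 := by linarith
  have hrhs : (((l : ℝ) - 1)⁻¹ - (l : ℝ)⁻¹) / 2 = 1 / (2 * ((l : ℝ) - 1) * l) := by
    field_simp
    ring
  rw [hrhs, ePAAPA, div_le_div_iff₀ (paapa_denom_pos (by omega)) (by nlinarith)]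
  nlinarith [m.cast_nonneg (α := ℝ)]

end Coefficients

section Products

variable {m a : ℕ}

theorem ePAAPA_le_one {l : ℕ} (hl : 2 ≤ l) : ePAAPA m l ≤ 1 := by
  have hl' : (2 : ℝ) ≤ l := by exact_mod_cast hl
  have h1 : ((l : ℝ) - 1)⁻¹ ≤ 1 := inv_le_one_of_one_le₀ (by linarith)
  have h2 : 0 ≤ (l : ℝ)⁻¹ := by positivity
  linarith [ePAAPA_le (m := m) hl]

theorem sum_ePAAPA_Ico_le (ha : 2 ≤ a) (b : ℕ) :
    ∑ h ∈ Ico a b, ePAAPA m h ≤ ((a : ℝ) - 1)⁻¹ / 2 := by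
  have ha' : (2 : ℝ) ≤ a := by exact_mod_cast ha
  rcases le_or_gt a b with hab | hba
  · set f : ℕ → ℝ := fun n ↦ -(((n : ℝ) - 1)⁻¹ / 2)
    have hb' : (2 : ℝ) ≤ b := by exact_mod_cast ha.trans hab
    calc ∑ h ∈ Ico a b, ePAAPA m h ≤ ∑ h ∈ Ico a b, (f (h + 1) - f h) := by
          refine sum_le_sum fun h hh ↦ ?_
          simp only [f, Nat.cast_add, Nat.cast_one, add_sub_cancel_right]
          linarith [ePAAPA_le (m := m) (ha.trans (mem_Ico.1 hh).1)]
      _ = f b - f a := sum_Ico_sub f hab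
      _ ≤ ((a : ℝ) - 1)⁻¹ / 2 := by
          have : 0 ≤ ((b : ℝ) - 1)⁻¹ := inv_nonneg.2 (by linarith)
          simp only [f]
          linarith
  · rw [Ico_eq_empty_of_le hba.le, sum_empty]
    exact div_nonneg (inv_nonneg.2 (by linarith)) zero_le_two

theorem half_le_prod_one_sub_ePAAPA (ha : 2 ≤ a) (b : ℕ) :
    1 / 2 ≤ ∏ h ∈ Ico a b, (1 - ePAAPA m h) := by
  have ha' : (2 : ℝ) ≤ a := by exact_mod_cast ha
  have hinv : ((a : ℝ) - 1)⁻¹ ≤ 1 := inv_le_one_of_one_le₀ (by linarith)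
  calc (1 : ℝ) / 2 ≤ 1 - ∑ h ∈ Ico a b, ePAAPA m h := by
        linarith [sum_ePAAPA_Ico_le (m := m) ha b]
    _ ≤ ∏ h ∈ Ico a b, (1 - ePAAPA m h) :=
        one_sub_sum_le_prod_one_sub _
          (fun h hh ↦ ePAAPA_nonneg (one_le_two.trans (ha.trans (mem_Ico.1 hh).1)))
          (fun h hh ↦ ePAAPA_le_one (ha.trans (mem_Ico.1 hh).1))

theorem prod_one_sub_ePAAPA_le_one (ha : 2 ≤ a) (b : ℕ) :
    ∏ h ∈ Ico a b, (1 - ePAAPA m h) ≤ 1 :=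
  prod_le_one (fun _ hh ↦ sub_nonneg.2 (ePAAPA_le_one (ha.trans (mem_Ico.1 hh).1)))
    (fun _ hh ↦ sub_le_self _ (ePAAPA_nonneg (one_le_two.trans (ha.trans (mem_Ico.1 hh).1))))

end Products

noncomputable def paapaTerm (m t l : ℕ) : ℝ :=
  log (1 + cPAAPA m l) * ∏ h ∈ Ico (l + 1) t, (1 - ePAAPA m h)

noncomputable def paapaNormalizer (m i t : ℕ) : ℝ :=
  ∑ l ∈ Ico i t, paapaTerm m t l

section Normalizer

variable {m i t : ℕ}

theorem log_add_one_sub_log_le_two_mul_paapaTerm {l : ℕ} (hl : 1 ≤ l) :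
    log ((l : ℝ) + 1) - log l ≤ 2 * paapaTerm m t l := by
  have hl' : (0 : ℝ) < l := by exact_mod_cast hl
  have hlog : log (1 + (l : ℝ)⁻¹) ≤ log (1 + cPAAPA m l) :=
    log_le_log (by positivity) (by linarith [inv_le_cPAAPA (m := m) hl])
  have hprod := half_le_prod_one_sub_ePAAPA (m := m) (Nat.succ_le_succ hl) t
  have hlog_nonneg : 0 ≤ log (1 + (l : ℝ)⁻¹) := log_nonneg (by simp)
  rw [log_add_one_sub_log hl', paapaTerm]
  nlinarith

theorem paapaTerm_le_three_mul_log_sub_log_sub_one {l : ℕ} (hl : 2 ≤ l) :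
    paapaTerm m t l ≤ 3 * (log l - log ((l : ℝ) - 1)) := by
  have hl' : (2 : ℝ) ≤ l := by exact_mod_cast hl
  have hc : (l : ℝ)⁻¹ ≤ cPAAPA m l := inv_le_cPAAPA (by omega)
  have hc_pos : 0 < cPAAPA m l := (inv_pos.2 (by linarith)).trans_le hc
  have hlog_nonneg : 0 ≤ log (1 + cPAAPA m l) := log_nonneg (by linarith)
  calc paapaTerm m t l ≤ log (1 + cPAAPA m l) :=
        mul_le_of_le_one_right hlog_nonneg (prod_one_sub_ePAAPA_le_one (by omega) t)
    _ ≤ cPAAPA m l := by linarith [log_le_sub_one_of_pos (show 0 < 1 + cPAAPA m l by linarith)]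
    _ ≤ 3 * (l : ℝ)⁻¹ := by rw [← div_eq_mul_inv]; exact cPAAPA_le hl
    _ ≤ 3 * (log l - log ((l : ℝ) - 1)) := by
        gcongr
        exact inv_le_log_sub_log_sub_one (by linarith)

theorem log_sub_log_le_two_mul_paapaNormalizer (hi : 1 ≤ i) (hit : i ≤ t) :
    log t - log i ≤ 2 * paapaNormalizer m i t := by
  have htel := sum_Ico_sub (fun n : ℕ ↦ log n) hit
  push_cast at htel
  rw [paapaNormalizer, mul_sum, ← htel]
  exact sum_le_sum fun l hl ↦
    log_add_one_sub_log_le_two_mul_paapaTerm (hi.trans (mem_Ico.1 hl).1)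

theorem paapaNormalizer_le_three_mul_log (hi : 2 ≤ i) (hit : i ≤ t) :
    paapaNormalizer m i t ≤ 3 * log t := by
  have hi' : (2 : ℝ) ≤ i := by exact_mod_cast hi
  have ht' : (2 : ℝ) ≤ t := by exact_mod_cast hi.trans hit
  have htel := sum_Ico_sub (fun n : ℕ ↦ log ((n : ℝ) - 1)) hit
  simp only [Nat.cast_add, Nat.cast_one, add_sub_cancel_right] at htel
  have hsum : paapaNormalizer m i t ≤ 3 * (log ((t : ℝ) - 1) - log ((i : ℝ) - 1)) := by
    rw [paapaNormalizer, ← htel, mul_sum]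
    exact sum_le_sum fun l hl ↦
      paapaTerm_le_three_mul_log_sub_log_sub_one (hi.trans (mem_Ico.1 hl).1)
  have ht_log : log ((t : ℝ) - 1) ≤ log t := log_le_log (by linarith) (by linarith)
  have hi_log : 0 ≤ log ((i : ℝ) - 1) := log_nonneg (by linarith)
  linarith

end Normalizer

theorem pa_apa_normalizer_is_Theta_log_general (m i : ℕ) (hi : 2 ≤ i) :
    ∃ A B : ℝ, ∃ T : ℕ, 0 < A ∧ A ≤ B ∧ i ≤ T ∧
      ∀ t, T ≤ t →
        A * Real.log t ≤
          (∑ l ∈ Finset.Ico i t, Real.log (1 + cPAAPA m l) *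
            ∏ h ∈ Finset.Ico (l + 1) t, (1 - ePAAPA m h)) ∧
        (∑ l ∈ Finset.Ico i t, Real.log (1 + cPAAPA m l) *
            ∏ h ∈ Finset.Ico (l + 1) t, (1 - ePAAPA m h)) ≤ B * Real.log t := by
  refine ⟨1 / 4, 3, i * i, by norm_num, by norm_num, Nat.le_mul_of_pos_left i (by omega),
    fun t ht ↦ ?_⟩
  have hit : i ≤ t := (Nat.le_mul_of_pos_left i (by omega)).trans ht
  have hi_pos : (0 : ℝ) < i := by exact_mod_cast (by omega : 0 < i)
  have hlog_i : 2 * log i ≤ log t := by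
    rw [two_mul, ← log_mul hi_pos.ne' hi_pos.ne']
    exact log_le_log (by positivity) (by exact_mod_cast ht)
  have hlower := log_sub_log_le_two_mul_paapaNormalizer (m := m) (by omega) hit
  have hupper := paapaNormalizer_le_three_mul_log (m := m) hi hit
  simp only [paapaNormalizer, paapaTerm] at hlower hupper
  exact ⟨by linarith, hupper⟩

/-- Remark 3.7 of the paper: the normalizing sequence
`∑_{l=i}^{t-1} ln(1+c_l) ∏_{h=l+1}^{t-1}(1-e_h)` is `Θ(ln t)` as `t → ∞`. -/
theorem pa_apa_normalizer_is_Theta_log (m i : ℕ) (hm : 1 ≤ m) (hi : 2 ≤ i) :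
    ∃ A B : ℝ, ∃ T : ℕ, 0 < A ∧ A ≤ B ∧ i ≤ T ∧
      ∀ t, T ≤ t →
        A * Real.log t ≤
          (∑ l ∈ Finset.Ico i t, Real.log (1 + cPAAPA m l) *
            ∏ h ∈ Finset.Ico (l + 1) t, (1 - ePAAPA m h)) ∧
        (∑ l ∈ Finset.Ico i t, Real.log (1 + cPAAPA m l) *
            ∏ h ∈ Finset.Ico (l + 1) t, (1 - ePAAPA m h)) ≤ B * Real.log t :=
  pa_apa_normalizer_is_Theta_log_general m i hi
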